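/- Completeness with respect to relational semantics: let 𝓛 be EL5⁻, EL5, EkL5⁻ or EkL5 (k ∈ {4,5,6}). For every set of formulas Ψ ∪ {χ} ⊆ Fm, if every relational model based on an 𝓛-frame satisfying Ψ also satisfies χ, then Ψ ⊢_𝓛 χ. -/

import Mathlib

/-- Formulas of the full modal-epistemic language `Fm`. -/
inductive Fm : Type
  | var : Nat → Fm
  | bot : Fm
  | and : Fm → Fm → Fm
  | or : Fm → Fm → Fm
  | imp : Fm → Fm → Fm
  | box : Fm → Fm
  | k : Fm → Fm

namespace Fm

def neg (φ : Fm) : Fm := φ.imp Fm.bot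

def top : Fm := Fm.neg Fm.bot

def biimp (φ ψ : Fm) : Fm := (φ.imp ψ).and (ψ.imp φ)

/-- Propositional identity as strict equivalence: `φ ≡ ψ := □(φ↔ψ)`. -/
def equiv (φ ψ : Fm) : Fm := Fm.box (Fm.biimp φ ψ)

def diam (φ : Fm) : Fm := Fm.neg (Fm.box (Fm.neg φ))

end Fm

/-- Hilbert-style axiom schemes for intuitionistic propositional logic,
instantiated over the full language (so that together with closure under MP
this yields exactly all substitution-instances of theorems of IPC). -/
inductive IPCAx : Fm → Prop
  | k1 (φ ψ : Fm) : IPCAx (φ.imp (ψ.imp φ))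
  | k2 (φ ψ χ : Fm) : IPCAx ((φ.imp (ψ.imp χ)).imp ((φ.imp ψ).imp (φ.imp χ)))
  | andI (φ ψ : Fm) : IPCAx (φ.imp (ψ.imp (φ.and ψ)))
  | andE1 (φ ψ : Fm) : IPCAx ((φ.and ψ).imp φ)
  | andE2 (φ ψ : Fm) : IPCAx ((φ.and ψ).imp ψ)
  | orI1 (φ ψ : Fm) : IPCAx (φ.imp (φ.or ψ))
  | orI2 (φ ψ : Fm) : IPCAx (ψ.imp (φ.or ψ))
  | orE (φ ψ χ : Fm) : IPCAx ((φ.imp χ).imp ((ψ.imp χ).imp ((φ.or ψ).imp χ)))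
  | efq (φ : Fm) : IPCAx (Fm.bot.imp φ)

/-- Scheme (INT): all theorems of IPC and their substitution-instances. -/
inductive IPCThm : Fm → Prop
  | ax {φ : Fm} : IPCAx φ → IPCThm φ
  | mp {φ ψ : Fm} : IPCThm (φ.imp ψ) → IPCThm φ → IPCThm ψ

/-- A specification of a logic of the hierarchy: all logics contain (INT), (A1),
(A2), (A3); the flags indicate which further axiom schemes are present. -/
structure LogicSpec : Type where
  hasA4 : Prop
  hasA5 : Prop
  hasKBel : Prop
  hasCoRe : Prop
  hasIntRe : Prop
  hasE4 : Prop
  hasE5 : Prop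
  hasPNB : Prop
  hasNNB : Prop

/-- The axioms of the logic specified by `S`. -/
inductive IsAxiom (S : LogicSpec) : Fm → Prop
  | int {φ : Fm} : IPCThm φ → IsAxiom S φ
  | a1 (φ ψ : Fm) : IsAxiom S ((Fm.box (φ.or ψ)).imp ((Fm.box φ).or (Fm.box ψ)))
  | a2 (φ : Fm) : IsAxiom S ((Fm.box φ).imp φ)
  | a3 (φ ψ : Fm) : IsAxiom S ((Fm.box (φ.imp ψ)).imp (Fm.box ((Fm.box φ).imp (Fm.box ψ))))
  | a4 (φ : Fm) : S.hasA4 → IsAxiom S ((Fm.box φ).imp (Fm.box (Fm.box φ)))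
  | a5 (φ : Fm) : S.hasA5 → IsAxiom S ((Fm.neg (Fm.box φ)).imp (Fm.box (Fm.neg (Fm.box φ))))
  | kbel (φ ψ : Fm) : S.hasKBel → IsAxiom S ((Fm.k (φ.imp ψ)).imp ((Fm.k φ).imp (Fm.k ψ)))
  | core (φ : Fm) : S.hasCoRe → IsAxiom S ((Fm.box φ).imp (Fm.box (Fm.k φ)))
  | intre (φ : Fm) : S.hasIntRe → IsAxiom S ((Fm.k φ).imp (Fm.neg (Fm.neg φ)))
  | e4 (φ : Fm) : S.hasE4 → IsAxiom S ((Fm.k φ).imp (Fm.k (Fm.k φ)))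
  | e5 (φ : Fm) : S.hasE5 → IsAxiom S ((Fm.neg (Fm.k φ)).imp (Fm.k (Fm.neg (Fm.k φ))))
  | pnb (φ : Fm) : S.hasPNB → IsAxiom S ((Fm.k φ).imp (Fm.box (Fm.k φ)))
  | nnb (φ : Fm) : S.hasNNB → IsAxiom S ((Fm.neg (Fm.k φ)).imp (Fm.box (Fm.neg (Fm.k φ))))

/-- Derivations from the hypotheses `Φ` over the axiom set `Ax`.  The parameter
`tnd` controls whether instances of the theorem scheme (TND) `φ ∨ ¬φ` may be
used.  The rules are Modus Ponens (MP) and Axiom Necessitation (AN), the latter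
applying to axioms only (not to (TND) instances nor to theorems). -/
inductive Deriv (Ax : Fm → Prop) (tnd : Prop) (Φ : Set Fm) : Fm → Prop
  | ax {φ : Fm} : Ax φ → Deriv Ax tnd Φ φ
  | hyp {φ : Fm} : φ ∈ Φ → Deriv Ax tnd Φ φ
  | tnd (φ : Fm) : tnd → Deriv Ax tnd Φ (φ.or (Fm.neg φ))
  | an {φ : Fm} : Ax φ → Deriv Ax tnd Φ (Fm.box φ)
  | mp {φ ψ : Fm} : Deriv Ax tnd Φ (φ.imp ψ) → Deriv Ax tnd Φ φ → Deriv Ax tnd Φ ψ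

/-- `Φ ⊢_S φ`. -/
def Derives (S : LogicSpec) (Φ : Set Fm) (φ : Fm) : Prop := Deriv (IsAxiom S) True Φ φ

/-- `⊢_S φ`. -/
def Thm (S : LogicSpec) (φ : Fm) : Prop := Derives S ∅ φ

/-- The modal logic `Ln` (n ∈ {3,4,5}): (INT)+(A1)+(A2)+(A3), plus (A4) if n ≥ 4
and (A5) if n ≥ 5. -/
def Lspec (n : Nat) : LogicSpec :=
  ⟨4 ≤ n, 5 ≤ n, False, False, False, False, False, False, False⟩

/-- `ELn⁻ = Ln + (KBel) + (CoRe)`. -/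
def ELmSpec (n : Nat) : LogicSpec :=
  ⟨4 ≤ n, 5 ≤ n, True, True, False, False, False, False, False⟩

/-- `E4Ln⁻ = ELn⁻ + (E4)`. -/
def E4LmSpec (n : Nat) : LogicSpec := { ELmSpec n with hasE4 := True }

/-- `E5Ln⁻ = E4Ln⁻ + (E5)`. -/
def E5LmSpec (n : Nat) : LogicSpec := { E4LmSpec n with hasE5 := True }

/-- `E6Ln⁻ = ELn⁻ + (PNB) + (NNB)`. -/
def E6LmSpec (n : Nat) : LogicSpec := { ELmSpec n with hasPNB := True, hasNNB := True }

/-- `ELn = ELn⁻ + (IntRe)`. -/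
def ELSpec (n : Nat) : LogicSpec := { ELmSpec n with hasIntRe := True }

def E4LSpec (n : Nat) : LogicSpec := { E4LmSpec n with hasIntRe := True }

def E5LSpec (n : Nat) : LogicSpec := { E5LmSpec n with hasIntRe := True }

def E6LSpec (n : Nat) : LogicSpec := { E6LmSpec n with hasIntRe := True }

/-- Membership in the hierarchy of logics considered in the paper. -/
def InHierarchy (S : LogicSpec) : Prop :=
  ∃ n, n ∈ ({3, 4, 5} : Set Nat) ∧
    (S = Lspec n ∨ S = ELmSpec n ∨ S = E4LmSpec n ∨ S = E5LmSpec n ∨ S = E6LmSpec n ∨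
      S = ELSpec n ∨ S = E4LSpec n ∨ S = E5LSpec n ∨ S = E6LSpec n)

/-- The S5-style logics: `EL5⁻`, `EL5`, `EkL5⁻`, `EkL5` for k ∈ {4,5,6}. -/
def L5Logics : Set LogicSpec :=
  {ELmSpec 5, E4LmSpec 5, E5LmSpec 5, E6LmSpec 5, ELSpec 5, E4LSpec 5, E5LSpec 5, E6LSpec 5}
/-- The raw data of an intuitionistic general frame: worlds, an accessibility
relation, a set `P` of propositions, a belief function `E` and a bottom world. -/
structure Frame (W : Type*) where
  R : W → W → Prop
  P : Set (Set W)
  E : W → Set (Set W)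
  wbot : W

/-- The operation `A ⊃ B` on propositions. -/
def Frame.himp {W : Type*} (F : Frame W) (A B : Set W) : Set W :=
  {w | ∀ w', F.R w w' → w' ∈ A → w' ∈ B}

/-- The operation `KA = {w | A ∈ E(w)}` on propositions. -/
def Frame.kset {W : Type*} (F : Frame W) (A : Set W) : Set W :=
  {w | A ∈ F.E w}

/-- `w` is an `R`-maximal world. -/
def Frame.IsMaxW {W : Type*} (F : Frame W) (w : W) : Prop :=
  ∀ w', F.R w w' → w' = w

/-- The basic frame conditions (of an `EL5⁻`-frame, except for the designated
maximal world): `R` is a partial order with least element `wbot` in which every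
`R`-chain has an upper bound; `P` consists of upper sets, contains `∅` and `W`
and is closed under `∩`, `∪`, `⊃` and `K`; each `E(w)` is a filter on `P`; and
`E` is monotone. -/
def IsBaseFrame {W : Type*} (F : Frame W) : Prop :=
  (∀ w, F.R w w) ∧
  (∀ ⦃w w' w''⦄, F.R w w' → F.R w' w'' → F.R w w'') ∧
  (∀ ⦃w w'⦄, F.R w w' → F.R w' w → w = w') ∧
  (∀ w, F.R F.wbot w) ∧
  (∀ C : Set W, IsChain F.R C → ∃ ub, ∀ w ∈ C, F.R w ub) ∧
  (∀ A ∈ F.P, ∀ ⦃w w'⦄, F.R w w' → w ∈ A → w' ∈ A) ∧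
  (∅ : Set W) ∈ F.P ∧
  (Set.univ : Set W) ∈ F.P ∧
  (∀ A ∈ F.P, ∀ B ∈ F.P, A ∩ B ∈ F.P) ∧
  (∀ A ∈ F.P, ∀ B ∈ F.P, A ∪ B ∈ F.P) ∧
  (∀ A ∈ F.P, ∀ B ∈ F.P, F.himp A B ∈ F.P) ∧
  (∀ A ∈ F.P, F.kset A ∈ F.P) ∧
  (∀ w, F.E w ⊆ F.P) ∧
  (∀ w, (F.E w).Nonempty) ∧
  (∀ w, ∀ A ∈ F.E w, ∀ B ∈ F.E w, A ∩ B ∈ F.E w) ∧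
  (∀ w, ∀ A ∈ F.E w, ∀ B ∈ F.P, A ⊆ B → B ∈ F.E w) ∧
  (∀ ⦃w w'⦄, F.R w w' → F.E w ⊆ F.E w')

/-- The `E4L5⁻`-frame condition: `A ∈ E(w)` implies `KA ∈ E(w)`. -/
def E4Cond {W : Type*} (F : Frame W) : Prop :=
  ∀ w, ∀ A ∈ F.P, A ∈ F.E w → F.kset A ∈ F.E w

/-- The `E5L5⁻`-frame condition: if `A ∉ E(w')` for all `w' ≥ w`,
then `(KA ⊃ ∅) ∈ E(w)`. -/
def E5Cond {W : Type*} (F : Frame W) : Prop :=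
  ∀ w, ∀ A ∈ F.P, (∀ w', F.R w w' → A ∉ F.E w') → F.himp (F.kset A) ∅ ∈ F.E w

/-- The `E6L5⁻`-frame condition: `E` is constant, i.e. `E(w) = E(wbot)` for all `w`. -/
def E6Cond {W : Type*} (F : Frame W) : Prop :=
  ∀ w, F.E w = F.E F.wbot

/-- The knowledge condition of `EkL5`-frames: every believed proposition
contains all accessible maximal worlds. -/
def KnowCond {W : Type*} (F : Frame W) : Prop :=
  ∀ w, ∀ A ∈ F.E w, ∀ w', F.R w w' → F.IsMaxW w' → w' ∈ A

/-- The condition (IntCo) of intuitionistic co-reflection: `w ∈ A` implies `A ∈ E(w)`. -/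
def IntCoCond {W : Type*} (F : Frame W) : Prop :=
  ∀ w, ∀ A ∈ F.P, w ∈ A → A ∈ F.E w

/-- An `IEL⁻`-frame: the basic frame conditions (no designated maximal world)
together with (IntCo). -/
def IsIELmFrame {W : Type*} (F : Frame W) : Prop := IsBaseFrame F ∧ IntCoCond F

/-- An `IEL`-frame: an `IEL⁻`-frame in which every believed proposition contains
all accessible maximal worlds. -/
def IsIELFrame {W : Type*} (F : Frame W) : Prop := IsIELmFrame F ∧ KnowCond F

/-- A frame with a designated world `wT`. -/
structure EFrame (W : Type*) extends Frame W where
  wT : W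

/-- An `EL5⁻`-frame: the basic frame conditions together with maximality of the
designated world `wT`. -/
def IsEL5mFrame {W : Type*} (F : EFrame W) : Prop :=
  IsBaseFrame F.toFrame ∧ F.toFrame.IsMaxW F.wT
/-- Interpretation of formulas in a frame under an assignment `g`:
`interpFm F g φ` is the set `φ* = {w | w ⊨ φ}`. -/
def interpFm {W : Type*} (F : Frame W) (g : Nat → Set W) : Fm → Set W
  | .var n => g n
  | .bot => ∅
  | .and φ ψ => interpFm F g φ ∩ interpFm F g ψ
  | .or φ ψ => interpFm F g φ ∪ interpFm F g ψ
  | .imp φ ψ => F.himp (interpFm F g φ) (interpFm F g ψ)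
  | .box φ => {_w | F.wbot ∈ interpFm F g φ}
  | .k φ => {w | interpFm F g φ ∈ F.E w}

/-- Frames for the S5-style logic specified by `S` (one of `EL5⁻`, `EL5`,
`EkL5⁻`, `EkL5` for k ∈ {4,5,6}). -/
def IsFrameFor (S : LogicSpec) {W : Type*} (F : EFrame W) : Prop :=
  IsEL5mFrame F ∧
  (S.hasE4 → E4Cond F.toFrame) ∧
  (S.hasE5 → E5Cond F.toFrame) ∧
  (S.hasPNB ∧ S.hasNNB → E6Cond F.toFrame) ∧
  (S.hasIntRe → KnowCond F.toFrame)

/-!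
Canonical model. Extend `Ψ` to a prime theory `T` closed under derivations with (TND) and
avoiding `χ`; by (TND) it is complete. The worlds are the prime theories, closed under
derivations *without* (TND), that contain the box-content `{φ | □φ ∈ T}`, ordered by
inclusion; the box-content itself is the least world and `T` a maximal one. Axioms (A1)–(A4)
make the box-content such a world, (A5) makes `□φ` true at one world iff at all of them,
(CoRe) and (KBel) make `E(w) := {[φ] | Kφ ∈ w}` a filter on the proof sets, and each of (E4),
(E5), (PNB), (IntRe) yields the corresponding frame condition.
-/

theorem IPCThm.imp_self (φ : Fm) : IPCThm (φ.imp φ) :=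
  .mp (.mp (.ax (.k2 φ (φ.imp φ) φ)) (.ax (.k1 φ (φ.imp φ)))) (.ax (.k1 φ φ))

namespace Deriv

variable {Ax : Fm → Prop} {tnd : Prop} {Φ Φ' : Set Fm} {φ ψ : Fm}

theorem mono (hsub : Φ ⊆ Φ') (h : Deriv Ax tnd Φ φ) : Deriv Ax tnd Φ' φ := by
  induction h with
  | ax h => exact .ax h
  | hyp h => exact .hyp (hsub h)
  | tnd φ h => exact .tnd φ h
  | an h => exact .an h
  | mp _ _ ih₁ ih₂ => exact .mp ih₁ ih₂

theorem mono_tnd {tnd' : Prop} (htnd : tnd → tnd') (h : Deriv Ax tnd Φ φ) :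
    Deriv Ax tnd' Φ φ := by
  induction h with
  | ax h => exact .ax h
  | hyp h => exact .hyp h
  | tnd φ h => exact .tnd φ (htnd h)
  | an h => exact .an h
  | mp _ _ ih₁ ih₂ => exact .mp ih₁ ih₂

theorem exists_mem_of_isChain {C : Set (Set Fm)} (hC : IsChain (· ⊆ ·) C) (hne : C.Nonempty)
    (h : Deriv Ax tnd (⋃₀ C) φ) : ∃ Δ ∈ C, Deriv Ax tnd Δ φ := by
  obtain ⟨Δ₀, hΔ₀⟩ := hne
  induction h with
  | ax h => exact ⟨Δ₀, hΔ₀, .ax h⟩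
  | hyp h => obtain ⟨Δ, hΔ, hφ⟩ := h; exact ⟨Δ, hΔ, .hyp hφ⟩
  | tnd φ h => exact ⟨Δ₀, hΔ₀, .tnd φ h⟩
  | an h => exact ⟨Δ₀, hΔ₀, .an h⟩
  | mp _ _ ih₁ ih₂ =>
    obtain ⟨Δ₁, h₁, d₁⟩ := ih₁
    obtain ⟨Δ₂, h₂, d₂⟩ := ih₂
    rcases hC.total h₁ h₂ with h | h
    · exact ⟨Δ₂, h₂, .mp (d₁.mono h) d₂⟩
    · exact ⟨Δ₁, h₁, .mp d₁ (d₂.mono h)⟩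

variable {S : LogicSpec}

theorem ipc (h : IPCAx φ) : Deriv (IsAxiom S) tnd Φ φ := .ax (.int (.ax h))

theorem deduction (h : Deriv (IsAxiom S) tnd (insert φ Φ) ψ) :
    Deriv (IsAxiom S) tnd Φ (φ.imp ψ) := by
  induction h with
  | ax h => exact .mp (ipc (.k1 _ φ)) (.ax h)
  | hyp h =>
    rcases h with rfl | h
    · exact .ax (.int (IPCThm.imp_self _))
    · exact .mp (ipc (.k1 _ φ)) (.hyp h)
  | tnd χ h => exact .mp (ipc (.k1 _ φ)) (.tnd χ h)
  | an h => exact .mp (ipc (.k1 _ φ)) (.an h)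
  | mp _ _ ih₁ ih₂ => exact .mp (.mp (ipc (.k2 _ _ _)) ih₁) ih₂

end Deriv

structure IsPrimeTheory (S : LogicSpec) (tnd : Prop) (Δ : Set Fm) : Prop where
  closed : ∀ φ, Deriv (IsAxiom S) tnd Δ φ → φ ∈ Δ
  prime : ∀ φ ψ, φ.or ψ ∈ Δ → φ ∈ Δ ∨ ψ ∈ Δ
  bot_not_mem : Fm.bot ∉ Δ

namespace IsPrimeTheory

variable {S : LogicSpec} {tnd : Prop} {Δ : Set Fm} {φ ψ : Fm}

theorem mp_mem (hΔ : IsPrimeTheory S tnd Δ) (hi : φ.imp ψ ∈ Δ) (h : φ ∈ Δ) : ψ ∈ Δ :=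
  hΔ.closed _ (.mp (.hyp hi) (.hyp h))

theorem of_tnd_imp {tnd' : Prop} (htnd : tnd' → tnd) (hΔ : IsPrimeTheory S tnd Δ) :
    IsPrimeTheory S tnd' Δ :=
  ⟨fun φ hd => hΔ.closed φ (hd.mono_tnd htnd), hΔ.prime, hΔ.bot_not_mem⟩

theorem mem_or_neg_mem (hΔ : IsPrimeTheory S True Δ) (φ : Fm) : φ ∈ Δ ∨ φ.neg ∈ Δ :=
  hΔ.prime _ _ (hΔ.closed _ (.tnd φ trivial))

theorem sUnion {C : Set (Set Fm)} (hC : IsChain (· ⊆ ·) C) (hne : C.Nonempty)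
    (h : ∀ Δ ∈ C, IsPrimeTheory S tnd Δ) : IsPrimeTheory S tnd (⋃₀ C) where
  closed φ hd := by
    obtain ⟨Δ, hΔ, d⟩ := hd.exists_mem_of_isChain hC hne
    exact ⟨Δ, hΔ, (h Δ hΔ).closed φ d⟩
  prime φ ψ := by
    rintro ⟨Δ, hΔ, hφψ⟩
    exact ((h Δ hΔ).prime φ ψ hφψ).imp (⟨Δ, hΔ, ·⟩) (⟨Δ, hΔ, ·⟩)
  bot_not_mem := by
    rintro ⟨Δ, hΔ, hbot⟩
    exact (h Δ hΔ).bot_not_mem hbot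

end IsPrimeTheory

theorem exists_isPrimeTheory_superset {S : LogicSpec} {tnd : Prop} {Γ : Set Fm} {φ : Fm}
    (h : ¬ Deriv (IsAxiom S) tnd Γ φ) :
    ∃ Δ, Γ ⊆ Δ ∧ IsPrimeTheory S tnd Δ ∧ φ ∉ Δ := by
  obtain ⟨Δ, hΓΔ, hmax⟩ := zorn_subset_nonempty {Δ | ¬ Deriv (IsAxiom S) tnd Δ φ}
    (fun C hC hchain hne => ⟨⋃₀ C, fun hd =>
      let ⟨_, hΔ, d⟩ := hd.exists_mem_of_isChain hchain hne; hC hΔ d,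
      fun _ => Set.subset_sUnion_of_mem⟩) Γ h
  have hΔ : ¬ Deriv (IsAxiom S) tnd Δ φ := hmax.prop
  have hext : ∀ ψ, ψ ∉ Δ → Deriv (IsAxiom S) tnd Δ (ψ.imp φ) := fun ψ hψ =>
    Deriv.deduction (not_not.mp fun hd => hψ (hmax.mem_of_prop_insert hd))
  refine ⟨Δ, hΓΔ, ⟨fun ψ hd => ?_, fun a b hab => ?_, fun hbot => ?_⟩,
    fun hφ => hΔ (.hyp hφ)⟩
  · by_contra hψ
    exact hΔ (.mp (hext ψ hψ) hd)
  · by_contra! hab'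
    exact hΔ (.mp (.mp (.mp (.ipc (.orE a b φ)) (hext a hab'.1)) (hext b hab'.2)) (.hyp hab))
  · exact hΔ (.mp (.ipc (.efq φ)) (.hyp hbot))

structure LogicSpec.ContainsEL5m (S : LogicSpec) : Prop where
  a4 : S.hasA4
  a5 : S.hasA5
  kbel : S.hasKBel
  core : S.hasCoRe

theorem LogicSpec.containsEL5m_of_mem_L5Logics {S : LogicSpec} (hS : S ∈ L5Logics) :
    S.ContainsEL5m := by
  simp only [L5Logics, Set.mem_insert_iff, Set.mem_singleton_iff] at hS
  rcases hS with rfl | rfl | rfl | rfl | rfl | rfl | rfl | rfl <;>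
    exact ⟨Nat.le_succ 4, le_rfl, trivial, trivial⟩

def boxContent (T : Set Fm) : Set Fm := {φ | Fm.box φ ∈ T}

section BoxContent

variable {S : LogicSpec} {T : Set Fm}

theorem boxContent_subset (hT : IsPrimeTheory S True T) : boxContent T ⊆ T :=
  fun φ h => hT.closed _ (.mp (.ax (.a2 φ)) (.hyp h))

theorem isPrimeTheory_boxContent (hS : S.ContainsEL5m) (hT : IsPrimeTheory S True T) :
    IsPrimeTheory S False (boxContent T) where
  closed φ hd := by
    induction hd with
    | ax h => exact hT.closed _ (.an h)
    | hyp h => exact h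
    | tnd _ h => exact h.elim
    | an h => exact hT.closed _ (.mp (.ax (.a4 _ hS.a4)) (.an h))
    | mp _ _ ih₁ ih₂ =>
      exact hT.closed _ (.mp (.mp (.ax (.a2 _)) (.mp (.ax (.a3 _ _)) (.hyp ih₁))) (.hyp ih₂))
  prime φ ψ h := hT.prime _ _ (hT.closed _ (.mp (.ax (.a1 φ ψ)) (.hyp h)))
  bot_not_mem h := hT.bot_not_mem (boxContent_subset hT h)

end BoxContent

@[ext]
structure World (S : LogicSpec) (T : Set Fm) where
  carrier : Set Fm
  isPrimeTheory : IsPrimeTheory S False carrier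
  boxContent_subset : boxContent T ⊆ carrier

namespace World

variable {S : LogicSpec} {T : Set Fm}

theorem exists_le_of_imp_not_mem (w : World S T) {φ ψ : Fm} (h : φ.imp ψ ∉ w.carrier) :
    ∃ w' : World S T, w.carrier ⊆ w'.carrier ∧ φ ∈ w'.carrier ∧ ψ ∉ w'.carrier := by
  have hnd : ¬ Deriv (IsAxiom S) False (insert φ w.carrier) ψ := fun hd =>
    h (w.isPrimeTheory.closed _ hd.deduction)
  obtain ⟨Δ, hsub, hΔ, hψ⟩ := exists_isPrimeTheory_superset hnd
  have hw : w.carrier ⊆ Δ := (Set.subset_insert _ _).trans hsub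
  exact ⟨⟨Δ, hΔ, w.boxContent_subset.trans hw⟩, hw, hsub (Set.mem_insert _ _), hψ⟩

theorem exists_upperBound_of_isChain (w₀ : World S T) (C : Set (World S T))
    (hC : IsChain (fun w w' => w.carrier ⊆ w'.carrier) C) :
    ∃ ub : World S T, ∀ w ∈ C, w.carrier ⊆ ub.carrier := by
  rcases C.eq_empty_or_nonempty with rfl | ⟨w₁, hw₁⟩
  · exact ⟨w₀, fun _ => False.elim⟩
  have hchain : IsChain (· ⊆ ·) (World.carrier '' C) :=
    hC.image_of_map_rel _ _ World.carrier fun _ _ h => h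
  have hU : IsPrimeTheory S False (⋃₀ (World.carrier '' C)) :=
    .sUnion hchain ⟨_, Set.mem_image_of_mem _ hw₁⟩
      fun _ ⟨w, _, hw⟩ => hw ▸ w.isPrimeTheory
  have hle : ∀ w ∈ C, w.carrier ⊆ ⋃₀ (World.carrier '' C) :=
    fun w hw => Set.subset_sUnion_of_mem ⟨w, hw, rfl⟩
  exact ⟨⟨_, hU, w₁.boxContent_subset.trans (hle w₁ hw₁)⟩, hle⟩

theorem mem_or_neg_mem_of_forall_le_eq (w : World S T)
    (hmax : ∀ w' : World S T, w.carrier ⊆ w'.carrier → w' = w) (φ : Fm) :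
    φ ∈ w.carrier ∨ φ.neg ∈ w.carrier := by
  by_contra! h
  obtain ⟨w', hle, hφ, -⟩ := w.exists_le_of_imp_not_mem h.2
  exact h.1 (hmax w' hle ▸ hφ)

end World

section Canonical

variable {S : LogicSpec} {T : Set Fm}

def bottomWorld (hS : S.ContainsEL5m) (hT : IsPrimeTheory S True T) : World S T :=
  ⟨boxContent T, isPrimeTheory_boxContent hS hT, subset_rfl⟩

def topWorld (hT : IsPrimeTheory S True T) : World S T :=
  ⟨T, hT.of_tnd_imp False.elim, boxContent_subset hT⟩

def proofSet (S : LogicSpec) (T : Set Fm) (φ : Fm) : Set (World S T) := {w | φ ∈ w.carrier}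

def canonicalFrame (hS : S.ContainsEL5m) (hT : IsPrimeTheory S True T) : EFrame (World S T) where
  R w w' := w.carrier ⊆ w'.carrier
  P := Set.range (proofSet S T)
  E w := proofSet S T '' {φ | Fm.k φ ∈ w.carrier}
  wbot := bottomWorld hS hT
  wT := topWorld hT

theorem box_mem_iff (hS : S.ContainsEL5m) (hT : IsPrimeTheory S True T) (w : World S T)
    {φ : Fm} : Fm.box φ ∈ w.carrier ↔ φ ∈ boxContent T := by
  refine ⟨fun h => ?_, fun h =>
    w.boxContent_subset (hT.closed _ (.mp (.ax (.a4 φ hS.a4)) (.hyp h)))⟩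
  rcases hT.mem_or_neg_mem (Fm.box φ) with hφ | hφ
  · exact hφ
  -- by (A5), `¬□φ ∈ T` is itself boxed, so it lies in every world
  have hneg : (Fm.box φ).neg ∈ w.carrier :=
    w.boxContent_subset (hT.closed _ (.mp (.ax (.a5 φ hS.a5)) (.hyp hφ)))
  exact (w.isPrimeTheory.bot_not_mem (w.isPrimeTheory.mp_mem hneg h)).elim

theorem imp_mem_boxContent_of_proofSet_subset (hS : S.ContainsEL5m) (hT : IsPrimeTheory S True T)
    {φ ψ : Fm} (h : proofSet S T φ ⊆ proofSet S T ψ) : φ.imp ψ ∈ boxContent T := by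
  by_contra hφψ
  obtain ⟨w, -, hφ, hψ⟩ := (bottomWorld hS hT).exists_le_of_imp_not_mem hφψ
  exact hψ (h hφ)

theorem k_mem_of_isAxiom (hS : S.ContainsEL5m) (hT : IsPrimeTheory S True T) (w : World S T)
    {φ : Fm} (h : IsAxiom S φ) : Fm.k φ ∈ w.carrier :=
  w.boxContent_subset (hT.closed _ (.mp (.ax (.core φ hS.core)) (.an h)))

theorem k_mem_of_proofSet_subset (hS : S.ContainsEL5m) (hT : IsPrimeTheory S True T)
    {w : World S T} {φ ψ : Fm} (hK : Fm.k φ ∈ w.carrier)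
    (h : proofSet S T φ ⊆ proofSet S T ψ) :
    Fm.k ψ ∈ w.carrier := by
  have hKimp : Fm.k (φ.imp ψ) ∈ w.carrier := w.boxContent_subset
    (hT.closed _ (.mp (.ax (.core _ hS.core))
      (.hyp (imp_mem_boxContent_of_proofSet_subset hS hT h))))
  exact w.isPrimeTheory.closed _ (.mp (.mp (.ax (.kbel φ ψ hS.kbel)) (.hyp hKimp)) (.hyp hK))

theorem proofSet_mem_E_iff (hS : S.ContainsEL5m) (hT : IsPrimeTheory S True T) {w : World S T}
    {φ : Fm} : proofSet S T φ ∈ (canonicalFrame hS hT).E w ↔ Fm.k φ ∈ w.carrier :=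
  ⟨fun ⟨_, hK, he⟩ => k_mem_of_proofSet_subset hS hT hK he.subset,
    fun h => ⟨φ, h, rfl⟩⟩

theorem proofSet_bot : proofSet S T Fm.bot = ∅ :=
  Set.eq_empty_of_forall_notMem fun w => w.isPrimeTheory.bot_not_mem

theorem proofSet_and (φ ψ : Fm) :
    proofSet S T (φ.and ψ) = proofSet S T φ ∩ proofSet S T ψ := by
  ext w
  have hw := w.isPrimeTheory
  exact ⟨fun h => ⟨hw.closed _ (.mp (.ipc (.andE1 φ ψ)) (.hyp h)),
    hw.closed _ (.mp (.ipc (.andE2 φ ψ)) (.hyp h))⟩,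
    fun h => hw.closed _ (.mp (.mp (.ipc (.andI φ ψ)) (.hyp h.1)) (.hyp h.2))⟩

theorem proofSet_or (φ ψ : Fm) :
    proofSet S T (φ.or ψ) = proofSet S T φ ∪ proofSet S T ψ := by
  ext w
  have hw := w.isPrimeTheory
  exact ⟨hw.prime φ ψ, fun h => h.elim
    (fun h => hw.closed _ (.mp (.ipc (.orI1 φ ψ)) (.hyp h)))
    (fun h => hw.closed _ (.mp (.ipc (.orI2 φ ψ)) (.hyp h)))⟩

theorem himp_proofSet (hS : S.ContainsEL5m) (hT : IsPrimeTheory S True T) (φ ψ : Fm) :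
    (canonicalFrame hS hT).himp (proofSet S T φ) (proofSet S T ψ) = proofSet S T (φ.imp ψ) := by
  ext w
  refine ⟨fun h => ?_, fun h w' hle hφ => w'.isPrimeTheory.mp_mem (hle h) hφ⟩
  by_contra hφψ
  obtain ⟨w', hle, hφ, hψ⟩ := w.exists_le_of_imp_not_mem hφψ
  exact hψ (h w' hle hφ)

theorem kset_proofSet (hS : S.ContainsEL5m) (hT : IsPrimeTheory S True T) (φ : Fm) :
    (canonicalFrame hS hT).kset (proofSet S T φ) = proofSet S T (Fm.k φ) :=
  Set.ext fun _ => proofSet_mem_E_iff hS hT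

theorem interpFm_canonicalFrame (hS : S.ContainsEL5m) (hT : IsPrimeTheory S True T) (φ : Fm) :
    interpFm (canonicalFrame hS hT).toFrame (fun n => proofSet S T (.var n)) φ =
      proofSet S T φ := by
  induction φ with
  | var n => rfl
  | bot => exact proofSet_bot.symm
  | and φ ψ ih₁ ih₂ => rw [interpFm, ih₁, ih₂, proofSet_and]
  | or φ ψ ih₁ ih₂ => rw [interpFm, ih₁, ih₂, proofSet_or]
  | imp φ ψ ih₁ ih₂ => rw [interpFm, ih₁, ih₂, himp_proofSet]
  | box φ ih => ext w; rw [interpFm, Set.mem_ofPred_eq, ih]; exact (box_mem_iff hS hT w).symm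
  | k φ ih => ext w; rw [interpFm, Set.mem_ofPred_eq, ih]; exact proofSet_mem_E_iff hS hT

end Canonical

section FrameConditions

variable {S : LogicSpec} {T : Set Fm}

theorem isBaseFrame_canonicalFrame (hS : S.ContainsEL5m) (hT : IsPrimeTheory S True T) :
    IsBaseFrame (canonicalFrame hS hT).toFrame := by
  refine ⟨fun _ => subset_rfl, fun _ _ _ => Set.Subset.trans,
    fun _ _ h₁ h₂ => World.ext (h₁.antisymm h₂), fun w => w.boxContent_subset,
    (bottomWorld hS hT).exists_upperBound_of_isChain, ?_, ⟨Fm.bot, proofSet_bot⟩,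
    ⟨Fm.bot.imp Fm.bot, Set.eq_univ_of_forall fun w =>
      w.isPrimeTheory.closed _ (.ax (.int (IPCThm.imp_self _)))⟩,
    ?_, ?_, ?_, ?_, ?_, ?_, ?_, ?_, ?_⟩
  · rintro _ ⟨φ, rfl⟩ _ _ hle hφ
    exact hle hφ
  · rintro _ ⟨φ, rfl⟩ _ ⟨ψ, rfl⟩
    exact ⟨φ.and ψ, proofSet_and φ ψ⟩
  · rintro _ ⟨φ, rfl⟩ _ ⟨ψ, rfl⟩
    exact ⟨φ.or ψ, proofSet_or φ ψ⟩
  · rintro _ ⟨φ, rfl⟩ _ ⟨ψ, rfl⟩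
    exact ⟨φ.imp ψ, (himp_proofSet hS hT φ ψ).symm⟩
  · rintro _ ⟨φ, rfl⟩
    exact ⟨Fm.k φ, (kset_proofSet hS hT φ).symm⟩
  · rintro _ _ ⟨φ, -, rfl⟩
    exact ⟨φ, rfl⟩
  · exact fun w => ⟨_, ⟨_, k_mem_of_isAxiom hS hT w (.int (IPCThm.imp_self Fm.bot)), rfl⟩⟩
  · rintro w _ ⟨φ, hφ, rfl⟩ _ ⟨ψ, hψ, rfl⟩
    have hw := w.isPrimeTheory
    have hKpair := k_mem_of_isAxiom hS hT w (.int (.ax (.andI φ ψ)))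
    have hKimp := hw.closed _ (.mp (.mp (.ax (.kbel _ _ hS.kbel)) (.hyp hKpair)) (.hyp hφ))
    refine ⟨φ.and ψ, hw.closed _ ?_, proofSet_and φ ψ⟩
    exact .mp (.mp (.ax (.kbel _ _ hS.kbel)) (.hyp hKimp)) (.hyp hψ)
  · rintro _ _ ⟨φ, hφ, rfl⟩ _ ⟨ψ, rfl⟩ hsub
    exact ⟨ψ, k_mem_of_proofSet_subset hS hT hφ hsub, rfl⟩
  · rintro _ _ hle _ ⟨φ, hφ, rfl⟩
    exact ⟨φ, hle hφ, rfl⟩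

theorem isMaxW_topWorld (hS : S.ContainsEL5m) (hT : IsPrimeTheory S True T) :
    (canonicalFrame hS hT).IsMaxW (topWorld hT) := by
  refine fun w hle => World.ext (subset_antisymm (fun φ hφ => ?_) hle)
  rcases hT.mem_or_neg_mem φ with h | h
  · exact h
  · exact (w.isPrimeTheory.bot_not_mem (w.isPrimeTheory.mp_mem (hle h) hφ)).elim

theorem e4Cond_canonicalFrame (hS : S.ContainsEL5m) (hT : IsPrimeTheory S True T)
    (hE4 : S.hasE4) : E4Cond (canonicalFrame hS hT).toFrame := by
  rintro w _ - ⟨φ, hφ, rfl⟩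
  rw [kset_proofSet]
  exact ⟨Fm.k φ, w.isPrimeTheory.closed _ (.mp (.ax (.e4 φ hE4)) (.hyp hφ)), rfl⟩

theorem e5Cond_canonicalFrame (hS : S.ContainsEL5m) (hT : IsPrimeTheory S True T)
    (hE5 : S.hasE5) : E5Cond (canonicalFrame hS hT).toFrame := by
  rintro w _ ⟨φ, rfl⟩ hnot
  have hneg : (Fm.k φ).neg ∈ w.carrier := by
    by_contra h
    obtain ⟨w', hle, hK, -⟩ := w.exists_le_of_imp_not_mem h
    exact hnot w' hle ⟨φ, hK, rfl⟩
  rw [kset_proofSet, ← proofSet_bot, himp_proofSet]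
  exact ⟨_, w.isPrimeTheory.closed _ (.mp (.ax (.e5 φ hE5)) (.hyp hneg)), rfl⟩

theorem e6Cond_canonicalFrame (hS : S.ContainsEL5m) (hT : IsPrimeTheory S True T)
    (hPNB : S.hasPNB) : E6Cond (canonicalFrame hS hT).toFrame := by
  refine fun w => Set.ext fun _ => ⟨?_, ?_⟩
  · rintro ⟨φ, hφ, rfl⟩
    have hbox := w.isPrimeTheory.closed _ (.mp (.ax (.pnb φ hPNB)) (.hyp hφ))
    exact ⟨φ, (box_mem_iff hS hT w).mp hbox, rfl⟩
  · rintro ⟨φ, hφ, rfl⟩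
    exact ⟨φ, w.boxContent_subset hφ, rfl⟩

theorem knowCond_canonicalFrame (hS : S.ContainsEL5m) (hT : IsPrimeTheory S True T)
    (hIntRe : S.hasIntRe) : KnowCond (canonicalFrame hS hT).toFrame := by
  rintro w _ ⟨φ, hφ, rfl⟩ w' hle hmax
  have hnn : φ.neg.neg ∈ w'.carrier :=
    w'.isPrimeTheory.closed _ (.mp (.ax (.intre φ hIntRe)) (.hyp (hle hφ)))
  rcases w'.mem_or_neg_mem_of_forall_le_eq hmax φ with h | h
  · exact h
  · exact (w'.isPrimeTheory.bot_not_mem (w'.isPrimeTheory.mp_mem hnn h)).elim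

theorem isFrameFor_canonicalFrame (hS : S.ContainsEL5m) (hT : IsPrimeTheory S True T) :
    IsFrameFor S (canonicalFrame hS hT) :=
  ⟨⟨isBaseFrame_canonicalFrame hS hT, isMaxW_topWorld hS hT⟩, e4Cond_canonicalFrame hS hT,
    e5Cond_canonicalFrame hS hT, fun h => e6Cond_canonicalFrame hS hT h.1,
    knowCond_canonicalFrame hS hT⟩

end FrameConditions

/-- Completeness w.r.t. relational semantics: let `𝓛` be `EL5⁻`,
`EL5`, `EkL5⁻` or `EkL5` (k ∈ {4,5,6}).  If every relational model based on an
`𝓛`-frame which satisfies `Ψ` also satisfies `χ`, then `Ψ ⊢_𝓛 χ`. -/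
theorem stmt16 (S : LogicSpec) (hS : S ∈ L5Logics) (Ψ : Set Fm) (χ : Fm)
    (h : ∀ (W : Type) (F : EFrame W) (g : Nat → Set W),
      IsFrameFor S F → (∀ n, g n ∈ F.P) →
      (∀ ψ ∈ Ψ, F.wT ∈ interpFm F.toFrame g ψ) →
      F.wT ∈ interpFm F.toFrame g χ) :
    Derives S Ψ χ := by
  by_contra hχ
  obtain ⟨T, hΨT, hT, hχT⟩ := exists_isPrimeTheory_superset hχ
  have hS' := LogicSpec.containsEL5m_of_mem_L5Logics hS
  have htruth := interpFm_canonicalFrame hS' hT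
  have hmodel := h _ (canonicalFrame hS' hT) _ (isFrameFor_canonicalFrame hS' hT)
    (fun n => ⟨.var n, rfl⟩) (fun ψ hψ => by rw [htruth]; exact hΨT hψ)
  rw [htruth] at hmodel
  exact hχT hmodel
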